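/- There exists a nonzero constant k ∈ ℂ such that the Jacobian determinant of (C₆, C₉, C₁₂) with respect to (u,v,w) equals k·C'₁₂(u,v,w)² as polynomials in u, v, w; in particular the zero set of this Jacobian consists of the twelve mirror planes. -/

import Mathlib

open Matrix Complex

noncomputable section

def ε : ℂ := Complex.exp (2 * Real.pi * Complex.I / 3)

lemma hε : IsPrimitiveRoot ε 3 := by
  have := Complex.isPrimitiveRoot_exp 3 (by norm_num)
  simpa [ε] using this

lemma hε3 : ε ^ 3 = 1 := hε.pow_eq_one

lemma hεne0 : ε ≠ 0 := by
  intro h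
  have := hε3
  rw [h] at this
  simp at this

lemma hεne1 : ε ≠ 1 := hε.ne_one (by norm_num)

def matA : Matrix (Fin 3) (Fin 3) ℂ := !![0,1,0; 0,0,1; 1,0,0]
def matB : Matrix (Fin 3) (Fin 3) ℂ := !![1,0,0; 0,0,1; 0,1,0]
def matC : Matrix (Fin 3) (Fin 3) ℂ := !![1,0,0; 0,ε,0; 0,0,ε^2]
def matD : Matrix (Fin 3) (Fin 3) ℂ := !![1,0,0; 0,ε,0; 0,0,ε]
def matE : Matrix (Fin 3) (Fin 3) ℂ :=
  (Complex.I * Real.sqrt 3)⁻¹ • !![1,1,1; 1,ε,ε^2; 1,ε^2,ε]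

lemma detA : matA.det ≠ 0 := by
  simp [matA, Matrix.det_fin_three]

lemma detC : matC.det ≠ 0 := by
  simp [matC, Matrix.det_fin_three]
  exact fun h => hεne0 h

lemma detD : matD.det ≠ 0 := by
  simp [matD, Matrix.det_fin_three]
  exact fun h => hεne0 h

lemma detE : matE.det ≠ 0 := by
  have h1 : (!![1,1,1; 1,ε,ε^2; 1,ε^2,ε] : Matrix (Fin 3) (Fin 3) ℂ).det
      = 3 * ε * (ε - 1) := by
    have h4 : ε ^ 4 = ε := by
      calc ε ^ 4 = ε ^ 3 * ε := by ring
      _ = ε := by rw [hε3]; ring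
    simp [Matrix.det_fin_three, Matrix.vecHead, Matrix.vecTail]
    linear_combination (-1 : ℂ) * h4
  have h2 : (Complex.I * (Real.sqrt 3 : ℂ)) ≠ 0 :=
    mul_ne_zero Complex.I_ne_zero
      (by exact_mod_cast (Real.sqrt_pos.mpr (by norm_num : (0:ℝ) < 3)).ne')
  rw [matE, Matrix.det_smul, h1]
  apply mul_ne_zero
  · apply pow_ne_zero; exact inv_ne_zero h2
  · apply mul_ne_zero (mul_ne_zero (by norm_num) hεne0)
    exact sub_ne_zero.mpr hεne1

def genA : GL (Fin 3) ℂ := Matrix.GeneralLinearGroup.mkOfDetNeZero matA detA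
def genB : GL (Fin 3) ℂ := Matrix.GeneralLinearGroup.mkOfDetNeZero matB (by simp [matB, Matrix.det_fin_three])
def genC : GL (Fin 3) ℂ := Matrix.GeneralLinearGroup.mkOfDetNeZero matC detC
def genD : GL (Fin 3) ℂ := Matrix.GeneralLinearGroup.mkOfDetNeZero matD detD
def genE : GL (Fin 3) ℂ := Matrix.GeneralLinearGroup.mkOfDetNeZero matE detE

def K : Subgroup (GL (Fin 3) ℂ) := Subgroup.closure {genA, genC, genD, genE}

open MvPolynomial in
def pC6 : MvPolynomial (Fin 3) ℂ :=
  X 0 ^ 6 + X 1 ^ 6 + X 2 ^ 6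
    - 10 * (X 0 ^ 3 * X 1 ^ 3 + X 0 ^ 3 * X 2 ^ 3 + X 1 ^ 3 * X 2 ^ 3)

open MvPolynomial in
def pC9 : MvPolynomial (Fin 3) ℂ :=
  (X 0 ^ 3 - X 1 ^ 3) * (X 0 ^ 3 - X 2 ^ 3) * (X 1 ^ 3 - X 2 ^ 3)

open MvPolynomial in
def pC12 : MvPolynomial (Fin 3) ℂ :=
  (X 0 ^ 12 + X 1 ^ 12 + X 2 ^ 12)
    + 4 * (X 0 ^ 9 * X 1 ^ 3 + X 0 ^ 9 * X 2 ^ 3 + X 1 ^ 9 * X 0 ^ 3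
        + X 1 ^ 9 * X 2 ^ 3 + X 2 ^ 9 * X 0 ^ 3 + X 2 ^ 9 * X 1 ^ 3)
    + 6 * (X 0 ^ 6 * X 1 ^ 6 + X 0 ^ 6 * X 2 ^ 6 + X 1 ^ 6 * X 2 ^ 6)
    + 228 * (X 0 ^ 6 * X 1 ^ 3 * X 2 ^ 3 + X 1 ^ 6 * X 0 ^ 3 * X 2 ^ 3
        + X 2 ^ 6 * X 0 ^ 3 * X 1 ^ 3)

open MvPolynomial in
def pC'12 : MvPolynomial (Fin 3) ℂ :=
  X 0 * X 1 * X 2 * (X 0 + X 1 + X 2) * (C ε * X 0 + X 1 + X 2) *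
    (X 0 + C ε * X 1 + X 2) * (C (ε ^ 2) * X 0 + C ε * X 1 + X 2) *
    (X 0 + C (ε ^ 2) * X 1 + X 2) * (C ε * X 0 + C ε * X 1 + X 2) *
    (C (ε ^ 2) * X 0 + X 1 + X 2) * (C ε * X 0 + C (ε ^ 2) * X 1 + X 2) *
    (C (ε ^ 2) * X 0 + C (ε ^ 2) * X 1 + X 2)

def jacobianC : MvPolynomial (Fin 3) ℂ :=
  Matrix.det (Matrix.of fun i j : Fin 3 => MvPolynomial.pderiv j (![pC6, pC9, pC12] i))

/-!
The invariants C₆, C₉, C₁₂ are polynomials in u³, v³, w³, so by the chain rule their Jacobian is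
27 (uvw)² times the Jacobian of the reduced invariants evaluated at (u³, v³, w³); the reduced
Jacobian is 96 ((x + y + z)³ − 27xyz)², a direct computation in degree 6. On the other side,
grouping the nine non-coordinate factors of C'₁₂ in triples, x³ + y³ = ∏ (x + ζy) followed by
x³ + y³ + z³ − 3xyz = ∏ (x + ζy + ζ²z) (ζ over the cube roots of unity) gives
C'₁₂ = uvw ((u³ + v³ + w³)³ − 27u³v³w³). Hence k = 27 · 96 = 2592.
-/

open MvPolynomial

section CubeRoots

variable {R : Type*} [CommRing R] {ω : R}

theorem pow_three_add_pow_three_eq_prod (hω : ω ^ 2 + ω + 1 = 0) (x y : R) :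
    x ^ 3 + y ^ 3 = (x + y) * (x + ω * y) * (x + ω ^ 2 * y) := by
  linear_combination -(x + y) * (x * y + (ω - 1) * y ^ 2) * hω

theorem pow_three_add_pow_three_add_pow_three_sub_eq_prod (hω : ω ^ 2 + ω + 1 = 0) (x y z : R) :
    x ^ 3 + y ^ 3 + z ^ 3 - 3 * x * y * z =
      (x + y + z) * (x + ω * y + ω ^ 2 * z) * (x + ω ^ 2 * y + ω * z) := by
  linear_combination
    -(x + y + z) * (x * y + x * z + (ω - 1) * (y ^ 2 + z ^ 2) + (ω ^ 2 - ω + 1) * y * z) * hω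

theorem prod_nine_linear_forms_eq (hω : ω ^ 2 + ω + 1 = 0) (u v w : R) :
    (u + v + w) * (ω * u + v + w) * (u + ω * v + w) * (ω ^ 2 * u + ω * v + w) *
      (u + ω ^ 2 * v + w) * (ω * u + ω * v + w) * (ω ^ 2 * u + v + w) *
      (ω * u + ω ^ 2 * v + w) * (ω ^ 2 * u + ω ^ 2 * v + w) =
      (u ^ 3 + v ^ 3 + w ^ 3) ^ 3 - 27 * u ^ 3 * v ^ 3 * w ^ 3 := by
  have h3 : ω ^ 3 = 1 := by linear_combination (ω - 1) * hω
  set A := u ^ 3 + v ^ 3 + w ^ 3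
  have cube_ω : (ω * u + w) ^ 3 + v ^ 3 = A + ω * (3 * u * w ^ 2) + ω ^ 2 * (3 * u ^ 2 * w) := by
    linear_combination u ^ 3 * h3
  have cube_ω_sq :
      (ω ^ 2 * u + w) ^ 3 + v ^ 3 = A + ω ^ 2 * (3 * u * w ^ 2) + ω * (3 * u ^ 2 * w) := by
    linear_combination ((ω ^ 3 + 1) * u ^ 3 + 3 * ω * u ^ 2 * w) * h3
  calc _ = ((u + w) + v) * ((u + w) + ω * v) * ((u + w) + ω ^ 2 * v) *
        (((ω * u + w) + v) * ((ω * u + w) + ω * v) * ((ω * u + w) + ω ^ 2 * v)) *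
        (((ω ^ 2 * u + w) + v) * ((ω ^ 2 * u + w) + ω * v) * ((ω ^ 2 * u + w) + ω ^ 2 * v)) := by
        ac_rfl
    _ = ((u + w) ^ 3 + v ^ 3) * ((ω * u + w) ^ 3 + v ^ 3) * ((ω ^ 2 * u + w) ^ 3 + v ^ 3) := by
        simp only [pow_three_add_pow_three_eq_prod hω]
    _ = (A + 3 * u * w ^ 2 + 3 * u ^ 2 * w) *
        (A + ω * (3 * u * w ^ 2) + ω ^ 2 * (3 * u ^ 2 * w)) *
        (A + ω ^ 2 * (3 * u * w ^ 2) + ω * (3 * u ^ 2 * w)) := by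
        rw [cube_ω, cube_ω_sq]; ring
    _ = _ := by rw [← pow_three_add_pow_three_add_pow_three_sub_eq_prod hω]; ring

end CubeRoots

section Jacobian

variable {R : Type*} [CommSemiring R] {σ τ ι : Type*}

theorem pderiv_bind₁ [Fintype σ] (g : σ → MvPolynomial τ R) (f : MvPolynomial σ R) (i : τ) :
    pderiv i (bind₁ g f) = ∑ j, bind₁ g (pderiv j f) * pderiv i (g j) := by
  classical
  induction f using MvPolynomial.induction_on with
  | C a => simp
  | add p q hp hq => simp only [map_add, hp, hq, add_mul, Finset.sum_add_distrib]
  | mul_X p k hp =>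
    simp only [map_mul, bind₁_X_right, Derivation.leibniz, pderiv_X, smul_eq_mul, hp, map_add,
      add_mul, Finset.sum_add_distrib, Finset.mul_sum, Pi.single_apply, mul_ite, mul_one,
      mul_zero, apply_ite (bind₁ g), map_zero, ite_mul, zero_mul, Finset.sum_ite_eq,
      Finset.mem_univ, if_true, mul_assoc]

@[simp]
theorem pderiv_ofNat (i : σ) (n : ℕ) [n.AtLeastTwo] :
    pderiv i (ofNat(n) : MvPolynomial σ R) = 0 := by
  rw [← map_ofNat C]
  exact pderiv_C

def jacobianMatrix (f : ι → MvPolynomial σ R) : Matrix ι σ (MvPolynomial σ R) :=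
  Matrix.of fun i j => pderiv j (f i)

theorem jacobianMatrix_bind₁ [Fintype σ] (f : ι → MvPolynomial σ R) (g : σ → MvPolynomial τ R) :
    jacobianMatrix (fun i => bind₁ g (f i)) =
      (jacobianMatrix f).map (bind₁ g) * jacobianMatrix g := by
  ext i k : 1
  simp [jacobianMatrix, Matrix.mul_apply, pderiv_bind₁]

theorem jacobianMatrix_X_pow [DecidableEq σ] (n : ℕ) :
    jacobianMatrix (fun i => (X i : MvPolynomial σ R) ^ n) =
      Matrix.diagonal fun i => (n : MvPolynomial σ R) * X i ^ (n - 1) := by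
  ext i j : 1
  by_cases h : i = j <;> simp [jacobianMatrix, h]

end Jacobian

theorem ε_sq_add_ε_add_one : ε ^ 2 + ε + 1 = 0 := by
  have h := hε.geom_sum_eq_zero (by norm_num)
  simp only [Finset.sum_range_succ, Finset.sum_range_zero] at h
  linear_combination h

theorem pC'12_eq : pC'12 = X 0 * X 1 * X 2 *
    ((X 0 ^ 3 + X 1 ^ 3 + X 2 ^ 3) ^ 3 - 27 * X 0 ^ 3 * X 1 ^ 3 * X 2 ^ 3) := by
  have hω : C ε ^ 2 + C ε + 1 = (0 : MvPolynomial (Fin 3) ℂ) := by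
    simpa using congrArg C ε_sq_add_ε_add_one
  rw [← prod_nine_linear_forms_eq hω, pC'12, map_pow]
  ac_rfl

def reducedInvariants : Fin 3 → MvPolynomial (Fin 3) ℂ :=
  ![X 0 ^ 2 + X 1 ^ 2 + X 2 ^ 2 - 10 * (X 0 * X 1 + X 0 * X 2 + X 1 * X 2),
    (X 0 - X 1) * (X 0 - X 2) * (X 1 - X 2),
    (X 0 ^ 4 + X 1 ^ 4 + X 2 ^ 4)
      + 4 * (X 0 ^ 3 * X 1 + X 0 ^ 3 * X 2 + X 1 ^ 3 * X 0 + X 1 ^ 3 * X 2 + X 2 ^ 3 * X 0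
        + X 2 ^ 3 * X 1)
      + 6 * (X 0 ^ 2 * X 1 ^ 2 + X 0 ^ 2 * X 2 ^ 2 + X 1 ^ 2 * X 2 ^ 2)
      + 228 * (X 0 ^ 2 * X 1 * X 2 + X 1 ^ 2 * X 0 * X 2 + X 2 ^ 2 * X 0 * X 1)]

theorem bind₁_reducedInvariants :
    (fun i => bind₁ (fun j => X j ^ 3) (reducedInvariants i)) = ![pC6, pC9, pC12] := by
  funext i
  fin_cases i <;> simp [reducedInvariants, pC6, pC9, pC12, map_ofNat] <;> ring

theorem det_jacobianMatrix_reducedInvariants :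
    (jacobianMatrix reducedInvariants).det =
      96 * ((X 0 + X 1 + X 2) ^ 3 - 27 * (X 0 * X 1 * X 2)) ^ 2 := by
  simp [Matrix.det_fin_three, jacobianMatrix, reducedInvariants, pderiv_X]
  ring

/-- The Jacobian determinant of (C₆, C₉, C₁₂) with respect to (u,v,w)
is a nonzero constant multiple of C'₁₂², as polynomials in u, v, w. -/
theorem jacobian_eq_const_mul_C'12_sq :
    ∃ k : ℂ, k ≠ 0 ∧ jacobianC = MvPolynomial.C k * pC'12 ^ 2 := by
  refine ⟨2592, by norm_num, ?_⟩
  let cube : Fin 3 → MvPolynomial (Fin 3) ℂ := fun j => X j ^ 3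
  calc jacobianC = (jacobianMatrix fun i => bind₁ cube (reducedInvariants i)).det := by
        rw [bind₁_reducedInvariants]; rfl
    _ = bind₁ cube (jacobianMatrix reducedInvariants).det * (jacobianMatrix cube).det := by
        rw [jacobianMatrix_bind₁, Matrix.det_mul, AlgHom.map_det]; rfl
    _ = C 2592 * pC'12 ^ 2 := by
        rw [det_jacobianMatrix_reducedInvariants, jacobianMatrix_X_pow, Matrix.det_diagonal,
          Fin.prod_univ_three, pC'12_eq]
        simp [cube, map_ofNat]
        ring
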